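/- arXiv:2104.06763 — 2 statements merged into one kernel-verified Lean document; each statement's English description precedes it below -/
import Mathlib

section
/- Let a, L, Δ > 0, and let φ : ℝ → ℝ be differentiable with L-Lipschitz derivative. Suppose |φ'(s)| ≤ a and |φ'(s+Δ)| ≤ a for some s ∈ ℝ. Then ∫_s^{s+Δ} |φ'(t)| dt ≤ a·Δ + L·Δ²/4. -/
/-!
On `[s, b]` a function with `|f s|, |f b| ≤ a` and Lipschitz constant `L` is bounded by the
tent `a + L · min (t - s) (b - t)`, whose integral is `a (b - s) + L (b - s)² / 4`.
-/

open Set intervalIntegral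

theorem integral_min_sub_sub_eq {s b : ℝ} (h : s ≤ b) :
    ∫ t in s..b, min (t - s) (b - t) = (b - s) ^ 2 / 4 := by
  have hm₁ : s ≤ (s + b) / 2 := by linarith
  have hm₂ : (s + b) / 2 ≤ b := by linarith
  have hc : Continuous fun t : ℝ => min (t - s) (b - t) := by fun_prop
  rw [← integral_add_adjacent_intervals (hc.intervalIntegrable s ((s + b) / 2))
    (hc.intervalIntegrable _ b)]
  have e₁ : ∫ t in s..(s + b) / 2, min (t - s) (b - t) = ∫ t in s..(s + b) / 2, (t - s) :=
    integral_congr fun t ht => by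
      rw [uIcc_of_le hm₁] at ht
      exact min_eq_left (by linarith [ht.2])
  have e₂ : ∫ t in (s + b) / 2..b, min (t - s) (b - t) = ∫ t in (s + b) / 2..b, (b - t) :=
    integral_congr fun t ht => by
      rw [uIcc_of_le hm₂] at ht
      exact min_eq_right (by linarith [ht.1])
  rw [e₁, e₂, integral_comp_sub_right (fun t => t), integral_comp_sub_left (fun t => t)]
  simp only [integral_id]
  ring

section LipschitzTent

variable {f : ℝ → ℝ} {L a s b : ℝ}

theorem abs_le_add_mul_abs_sub (hlip : ∀ x y, |f x - f y| ≤ L * |x - y|) (hs : |f s| ≤ a)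
    (t : ℝ) : |f t| ≤ a + L * |t - s| := by
  have := abs_sub_abs_le_abs_sub (f t) (f s)
  linarith [hlip t s]

theorem abs_le_tent (hlip : ∀ x y, |f x - f y| ≤ L * |x - y|) (hs : |f s| ≤ a) (hb : |f b| ≤ a)
    {t : ℝ} (ht : t ∈ Icc s b) : |f t| ≤ a + L * min (t - s) (b - t) := by
  rcases min_choice (t - s) (b - t) with h | h <;> rw [h]
  · simpa [abs_of_nonneg (sub_nonneg.2 ht.1)] using abs_le_add_mul_abs_sub hlip hs t
  · simpa [abs_sub_comm t b, abs_of_nonneg (sub_nonneg.2 ht.2)] using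
      abs_le_add_mul_abs_sub hlip hb t

theorem integral_abs_le_of_abs_sub_le (hsb : s ≤ b) (hlip : ∀ x y, |f x - f y| ≤ L * |x - y|)
    (hs : |f s| ≤ a) (hb : |f b| ≤ a) :
    ∫ t in s..b, |f t| ≤ a * (b - s) + L * (b - s) ^ 2 / 4 := by
  have hf : Continuous f :=
    (LipschitzWith.of_dist_le' (by simpa only [Real.dist_eq] using hlip)).continuous
  have htent : Continuous fun t => a + L * min (t - s) (b - t) := by fun_prop
  calc ∫ t in s..b, |f t|
      ≤ ∫ t in s..b, (a + L * min (t - s) (b - t)) :=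
        integral_mono_on hsb (hf.abs.intervalIntegrable s b) (htent.intervalIntegrable s b)
          fun t ht => abs_le_tent hlip hs hb ht
    _ = a * (b - s) + L * (b - s) ^ 2 / 4 := by
        have hmin : Continuous fun t : ℝ => L * min (t - s) (b - t) := by fun_prop
        rw [integral_add intervalIntegrable_const (hmin.intervalIntegrable s b), integral_const_mul,
          integral_min_sub_sub_eq hsb, integral_const, smul_eq_mul]
        ring

end LipschitzTent

theorem stmt_10_general (φ : ℝ → ℝ) (L a Δ s : ℝ)
    (hΔ : 0 < Δ)
    (hlip : ∀ x y, |deriv φ x - deriv φ y| ≤ L * |x - y|)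
    (h1 : |deriv φ s| ≤ a) (h2 : |deriv φ (s + Δ)| ≤ a) :
    ∫ t in s..(s + Δ), |deriv φ t| ≤ a * Δ + L * Δ ^ 2 / 4 := by
  simpa using integral_abs_le_of_abs_sub_le (by linarith) hlip h1 h2

/-- If `φ` has an `L`-Lipschitz derivative with `|φ'(s)| ≤ a` and `|φ'(s+Δ)| ≤ a`, then
`∫_s^{s+Δ} |φ'(t)| dt ≤ a·Δ + L·Δ²/4`. -/
theorem stmt_10 (φ : ℝ → ℝ) (L a Δ s : ℝ)
    (hΔ : 0 < Δ) (ha : 0 ≤ a) (hL : 0 < L)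
    (hdiff : Differentiable ℝ φ)
    (hlip : ∀ x y, |deriv φ x - deriv φ y| ≤ L * |x - y|)
    (h1 : |deriv φ s| ≤ a) (h2 : |deriv φ (s + Δ)| ≤ a) :
    ∫ t in s..(s + Δ), |deriv φ t| ≤ a * Δ + L * Δ ^ 2 / 4 :=
  stmt_10_general φ L a Δ s hΔ hlip h1 h2
end

section
/- Let v ∈ ℝ^d be orthogonal to e_d (i.e., v_d = 0), let t ∈ [−2, 2], let s ∈ [0, 1], and let u ∈ ℝ^d with ‖u‖ ≤ 1. Then the vector g = t·e_d − (1/4)·v̄ − s(v̄ − (1/2)u) satisfies ‖g‖ ≥ 1/4, where v̄ = v/‖v‖ (v ≠ 0). -/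
open scoped RealInnerProductSpace

/-- Pairing `g` with the unit vector `-w` kills the `e`-component and leaves
`⟪g, -w⟫ = 1/4 + s - (s/2)⟪u, w⟫ ≥ 1/4 + s/2`. -/
theorem quarter_le_norm_smul_sub_smul_sub_smul {E : Type*} [NormedAddCommGroup E]
    [InnerProductSpace ℝ E] {e w u : E} (he : ⟪e, w⟫ = 0) (hw : ‖w‖ = 1) (hu : ‖u‖ ≤ 1)
    (t : ℝ) {s : ℝ} (hs : 0 ≤ s) :
    (1 / 4 : ℝ) ≤ ‖t • e - (1 / 4 : ℝ) • w - s • (w - (1 / 2 : ℝ) • u)‖ := by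
  set g := t • e - (1 / 4 : ℝ) • w - s • (w - (1 / 2 : ℝ) • u)
  have hww : ⟪w, w⟫ = 1 := by rw [real_inner_self_eq_norm_sq, hw, one_pow]
  have huw : ⟪u, w⟫ ≤ 1 :=
    (real_inner_le_norm u w).trans (by rw [hw, mul_one]; exact hu)
  have hpair : ⟪g, -w⟫ = 1 / 4 + s - s / 2 * ⟪u, w⟫ := by
    simp only [g, inner_neg_right, inner_sub_left, real_inner_smul_left, he, hww]
    ring
  calc (1 / 4 : ℝ) ≤ ⟪g, -w⟫ := by rw [hpair]; nlinarith
    _ ≤ ‖g‖ * ‖-w‖ := real_inner_le_norm g (-w)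
    _ = ‖g‖ := by rw [norm_neg, hw, mul_one]

theorem inner_single_last_eq_zero {n : ℕ} {v : EuclideanSpace ℝ (Fin (n + 1))}
    (hvd : v (Fin.last n) = 0) (c : ℝ) :
    ⟪EuclideanSpace.single (Fin.last n) (1 : ℝ), c • v⟫ = 0 := by
  simp [EuclideanSpace.inner_single_left, hvd]

theorem stmt_14_general (n : ℕ) (v u : EuclideanSpace ℝ (Fin (n + 1)))
    (hv : v ≠ 0) (hvd : v (Fin.last n) = 0)
    (t s : ℝ) (hs : s ∈ Set.Icc (0 : ℝ) 1)
    (hu : ‖u‖ ≤ 1) :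
    (1 / 4 : ℝ) ≤
      ‖t • (EuclideanSpace.single (Fin.last n) (1 : ℝ)) - (1 / 4 : ℝ) • (‖v‖⁻¹ • v)
        - s • (‖v‖⁻¹ • v - (1 / 2 : ℝ) • u)‖ :=
  quarter_le_norm_smul_sub_smul_sub_smul (inner_single_last_eq_zero hvd _)
    (norm_smul_inv_norm hv) hu t hs.1

/-- For `v ≠ 0` with `v_d = 0`, `t ∈ [−2,2]`, `s ∈ [0,1]` and `‖u‖ ≤ 1`, the vector
`g = t·e_d − (1/4)v̄ − s(v̄ − u/2)` has norm at least `1/4`. -/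
theorem stmt_14 (n : ℕ) (v u : EuclideanSpace ℝ (Fin (n + 1)))
    (hv : v ≠ 0) (hvd : v (Fin.last n) = 0)
    (t s : ℝ) (ht : t ∈ Set.Icc (-2 : ℝ) 2) (hs : s ∈ Set.Icc (0 : ℝ) 1)
    (hu : ‖u‖ ≤ 1) :
    (1 / 4 : ℝ) ≤
      ‖t • (EuclideanSpace.single (Fin.last n) (1 : ℝ)) - (1 / 4 : ℝ) • (‖v‖⁻¹ • v)
        - s • (‖v‖⁻¹ • v - (1 / 2 : ℝ) • u)‖ :=
  stmt_14_general n v u hv hvd t s hs hu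
end
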